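/- arXiv:2009.04430 — 3 statements merged into one kernel-verified Lean document; each statement's English description precedes it below -/
import Mathlib

section
/- Let Ω ⊂ ℝ³ be open, bounded and convex with L³(Ω) = 1 and Ω ⊂ B_R(0) for some R > 0, let m be a mass vector, T > 0, and let z = (z_1,…,z_N) : [0,T] → ℝ^{3N} be a continuously differentiable solution of the seed ODE with z(0) = z̄ = (z̄_1,…,z̄_N). Then for each i ∈ {1,…,N}: |z_i(t)| ≤ |z̄_i| + R t for all t ∈ [0,T], and |ż_i(t)| ≤ |z̄_i| + R(1+T) for all t ∈ (0,T). -/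
open MeasureTheory Set Filter
open scoped ENNReal Topology RealInnerProductSpace

noncomputable section

/-- Geostrophic space: `ℝ³` with the Euclidean norm. -/
abbrev E3 : Type := EuclideanSpace ℝ (Fin 3)

/-- The matrix `J` encoding planetary rotation: `J₁₂ = -1`, `J₂₁ = 1`, all other entries `0`. -/
def matJ : Matrix (Fin 3) (Fin 3) ℝ := !![0, -1, 0; 1, 0, 0; 0, 0, 0]

/-- `J` as a (continuous) linear map on `ℝ³`. -/
def J : E3 →L[ℝ] E3 := LinearMap.toContinuousLinearMap (Matrix.toEuclideanLin matJ)

/-- The Laguerre cell `C_i(z, w)` of `Ω` generated by seeds `z` and weights `w`. -/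
def lagCell {N : ℕ} (Ω : Set E3) (z : Fin N → E3) (w : Fin N → ℝ) (i : Fin N) : Set E3 :=
  {x | x ∈ Ω ∧ ∀ j, ‖x - z i‖ ^ 2 - w i ≤ ‖x - z j‖ ^ 2 - w j}

/-- `z : [0,T] → ℝ^{3N}` is a continuously differentiable solution of the seed ODE
`ż_i = J (z_i - x_i(z))`, where `x_i(z)` is the centroid of the `i`-th cell of the optimal
Laguerre tessellation of `Ω` with masses `m`. -/
def SeedODESol (Ω : Set E3) {N : ℕ} (m : Fin N → ℝ) (T : ℝ) (z : ℝ → Fin N → E3) : Prop :=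
  ContDiffOn ℝ 1 z (Icc 0 T) ∧
  ∀ t ∈ Icc (0:ℝ) T,
    (∀ i j : Fin N, i ≠ j → z t i ≠ z t j) ∧
    ∃ w : Fin N → ℝ,
      (∀ j, volume (lagCell Ω (z t) w j) = ENNReal.ofReal (m j)) ∧
      ∀ i, HasDerivWithinAt (fun s => z s i)
        (J (z t i - (m i)⁻¹ • ∫ x in lagCell Ω (z t) w i, x)) (Icc 0 T) t

/-!
Since `⟪J y, y⟫ = 0`, the rotation `J z_i` does not change `|z_i|`, so
`d/dt |z_i|² = -2⟪J x_i, z_i⟫ ≤ 2R|z_i|`, the centroid `x_i` lying in `Ω ⊆ B_R(0)`. Comparing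
`|z_i|²` with `(|z̄_i| + (R + ε)t + ε)²` gives `|z_i(t)| ≤ |z̄_i| + Rt`, and then
`|ż_i| ≤ |z_i| + |x_i| ≤ |z̄_i| + R(1 + T)`.
-/

section Fencing

variable {E : Type*} [NormedAddCommGroup E] [InnerProductSpace ℝ E] {f f' : ℝ → E} {a b R : ℝ}

theorem norm_le_add_mul_add_of_inner_deriv_le (hR : 0 ≤ R) (hf : ContinuousOn f (Icc a b))
    (hf' : ∀ t ∈ Ico a b, HasDerivWithinAt f (f' t) (Ici t) t)
    (bound : ∀ t ∈ Ico a b, ⟪f' t, f t⟫ ≤ R * ‖f t‖) {ε : ℝ} (hε : 0 < ε) :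
    ∀ t ∈ Icc a b, ‖f t‖ ≤ ‖f a‖ + (R + ε) * (t - a) + ε := by
  set B : ℝ → ℝ := fun t => ‖f a‖ + (R + ε) * (t - a) + ε
  have hB_pos : ∀ t ∈ Icc a b, 0 < B t := fun t ht => by
    have : 0 ≤ (R + ε) * (t - a) := mul_nonneg (by linarith) (by linarith [ht.1])
    linarith [norm_nonneg (f a)]
  have hB_deriv (t : ℝ) : HasDerivAt (fun t => B t ^ 2) (2 * B t * (R + ε)) t := by
    refine (((((hasDerivAt_id t).sub_const a).const_mul (R + ε)).const_add ‖f a‖).add_const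
      ε).fun_pow 2 |>.congr_deriv ?_
    simp [B]
  -- Fence `‖f‖²` by `B²`: where they touch, `d/dt ‖f‖² = 2⟪f', f⟫ ≤ 2R‖f‖ < 2(R + ε)B`.
  have hsq : ∀ t ∈ Icc a b, ‖f t‖ ^ 2 ≤ B t ^ 2 := by
    refine image_le_of_deriv_right_lt_deriv_boundary' (f := fun t => ‖f t‖ ^ 2)
      (f' := fun t => 2 * ⟪f' t, f t⟫) (hf.norm.pow 2)
      (fun t ht => ?_) ?_ (by fun_prop) (fun t _ => (hB_deriv t).hasDerivWithinAt) ?_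
    · simpa only [real_inner_self_eq_norm_sq, ← two_mul, real_inner_comm]
        using (hf' t ht).inner ℝ (hf' t ht)
    · simp only [B, sub_self, mul_zero, add_zero]
      gcongr
      linarith
    · intro t ht htouch
      have hfB : ‖f t‖ = B t :=
        (pow_left_inj₀ (norm_nonneg _) (hB_pos t (Ico_subset_Icc_self ht)).le two_ne_zero).1 htouch
      have hinner := bound t ht
      rw [hfB] at hinner
      nlinarith [hB_pos t (Ico_subset_Icc_self ht)]
  exact fun t ht => (pow_le_pow_iff_left₀ (norm_nonneg _) (hB_pos t ht).le two_ne_zero).1 (hsq t ht)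

theorem norm_le_add_mul_of_inner_deriv_le (hR : 0 ≤ R) (hf : ContinuousOn f (Icc a b))
    (hf' : ∀ t ∈ Ico a b, HasDerivWithinAt f (f' t) (Ici t) t)
    (bound : ∀ t ∈ Ico a b, ⟪f' t, f t⟫ ≤ R * ‖f t‖) :
    ∀ t ∈ Icc a b, ‖f t‖ ≤ ‖f a‖ + R * (t - a) := by
  intro t ht
  refine le_of_forall_pos_le_add fun δ hδ => ?_
  have hta : 0 < t - a + 1 := by linarith [ht.1]
  calc ‖f t‖ ≤ ‖f a‖ + (R + δ / (t - a + 1)) * (t - a) + δ / (t - a + 1) :=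
        norm_le_add_mul_add_of_inner_deriv_le hR hf hf' bound (div_pos hδ hta) t ht
    _ = ‖f a‖ + R * (t - a) + δ := by field_simp; ring

end Fencing

theorem norm_inv_smul_setIntegral_le {E : Type*} [NormedAddCommGroup E] [NormedSpace ℝ E]
    [MeasurableSpace E] {μ : Measure E} {S : Set E} {m R : ℝ} (hm : 0 < m)
    (hS : μ S = ENNReal.ofReal m) (hSR : ∀ x ∈ S, ‖x‖ ≤ R) :
    ‖m⁻¹ • ∫ x in S, x ∂μ‖ ≤ R := by
  have hμS : μ.real S = m := by rw [measureReal_def, hS, ENNReal.toReal_ofReal hm.le]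
  have hint := norm_setIntegral_le_of_norm_le_const (hS ▸ ENNReal.ofReal_lt_top) hSR
  rw [hμS] at hint
  rw [norm_smul, norm_inv, Real.norm_of_nonneg hm.le, inv_mul_le_iff₀ hm, mul_comm]
  exact hint

theorem inner_J_self (y : E3) : ⟪J y, y⟫ = 0 := by
  simp [J, matJ, Matrix.toEuclideanLin, Matrix.mulVec, dotProduct, Fin.sum_univ_three,
    PiLp.inner_apply, RCLike.inner_apply]
  ring

theorem norm_J_le (y : E3) : ‖J y‖ ≤ ‖y‖ := by
  rw [EuclideanSpace.norm_eq, EuclideanSpace.norm_eq]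
  apply Real.sqrt_le_sqrt
  simp [J, matJ, Matrix.toEuclideanLin, Matrix.mulVec, dotProduct, Fin.sum_univ_three]
  nlinarith [sq_nonneg (y 2)]

theorem inner_J_sub_self_le (y c : E3) : ⟪J (y - c), y⟫ ≤ ‖c‖ * ‖y‖ := by
  rw [map_sub, inner_sub_left, inner_J_self, zero_sub, ← inner_neg_left]
  calc ⟪-J c, y⟫ ≤ ‖-J c‖ * ‖y‖ := real_inner_le_norm _ _
    _ ≤ ‖c‖ * ‖y‖ := by rw [norm_neg]; gcongr; exact norm_J_le c

namespace SeedODESol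

variable {Ω : Set E3} {R : ℝ} {N : ℕ} {m : Fin N → ℝ} {T : ℝ} {z : ℝ → Fin N → E3}

theorem exists_norm_le_hasDerivWithinAt (hΩR : Ω ⊆ Metric.ball 0 R) (hm : ∀ i, 0 < m i)
    (hsol : SeedODESol Ω m T z) :
    ∃ c : ℝ → Fin N → E3, ∀ t ∈ Icc 0 T, ∀ i, ‖c t i‖ ≤ R ∧
      HasDerivWithinAt (fun s => z s i) (J (z t i - c t i)) (Icc 0 T) t := by
  choose! w hvol hder using fun t ht => (hsol.2 t ht).2
  exact ⟨fun t i => (m i)⁻¹ • ∫ x in lagCell Ω (z t) (w t) i, x, fun t ht i =>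
    ⟨norm_inv_smul_setIntegral_le (hm i) (hvol t ht i) fun x hx =>
      (mem_ball_zero_iff.1 (hΩR hx.1)).le, hder t ht i⟩⟩

theorem norm_le (hΩR : Ω ⊆ Metric.ball 0 R) (hR : 0 ≤ R) (hm : ∀ i, 0 < m i)
    (hsol : SeedODESol Ω m T z) (i : Fin N) :
    ∀ t ∈ Icc 0 T, ‖z t i‖ ≤ ‖z 0 i‖ + R * t := by
  obtain ⟨c, hc⟩ := hsol.exists_norm_le_hasDerivWithinAt hΩR hm
  simpa only [sub_zero] using norm_le_add_mul_of_inner_deriv_le hR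
    (fun t ht => (hc t ht i).2.continuousWithinAt)
    (fun t ht => (hc t (Ico_subset_Icc_self ht) i).2.mono_of_mem_nhdsWithin
      (Icc_mem_nhdsGE_of_mem ht))
    (fun t ht => (inner_J_sub_self_le _ _).trans <|
      mul_le_mul_of_nonneg_right (hc t (Ico_subset_Icc_self ht) i).1 (norm_nonneg _))

theorem norm_deriv_le (hΩR : Ω ⊆ Metric.ball 0 R) (hR : 0 ≤ R) (hm : ∀ i, 0 < m i)
    (hsol : SeedODESol Ω m T z) (i : Fin N) {t : ℝ} (ht : t ∈ Ioo 0 T) {v : E3}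
    (hv : HasDerivWithinAt (fun s => z s i) v (Icc 0 T) t) :
    ‖v‖ ≤ ‖z 0 i‖ + R * (1 + T) := by
  obtain ⟨c, hc⟩ := hsol.exists_norm_le_hasDerivWithinAt hΩR hm
  have ht' : t ∈ Icc 0 T := Ioo_subset_Icc_self ht
  have hv_eq : v = J (z t i - c t i) :=
    (uniqueDiffOn_Icc (ht.1.trans ht.2) t ht').eq_deriv _ hv (hc t ht' i).2
  calc ‖v‖ ≤ ‖z t i‖ + ‖c t i‖ := hv_eq ▸ (norm_J_le _).trans (norm_sub_le _ _)
    _ ≤ ‖z 0 i‖ + R * t + R := add_le_add (hsol.norm_le hΩR hR hm i t ht') (hc t ht' i).1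
    _ ≤ ‖z 0 i‖ + R * (1 + T) := by nlinarith [ht.2]

end SeedODESol

theorem seed_ode_apriori_estimates_general
    (Ω : Set E3) (R : ℝ) (hR : 0 < R) (hΩR : Ω ⊆ Metric.ball 0 R)
    {N : ℕ} (m : Fin N → ℝ) (hm : ∀ i, 0 < m i)
    (T : ℝ) (z : ℝ → Fin N → E3) (zbar : Fin N → E3)
    (hsol : SeedODESol Ω m T z) (hinit : z 0 = zbar) :
    ∀ i : Fin N,
      (∀ t ∈ Icc (0:ℝ) T, ‖z t i‖ ≤ ‖zbar i‖ + R * t) ∧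
      ∀ t ∈ Ioo (0:ℝ) T, ∀ v : E3,
        HasDerivWithinAt (fun s => z s i) v (Icc 0 T) t →
        ‖v‖ ≤ ‖zbar i‖ + R * (1 + T) := by
  subst hinit
  exact fun i => ⟨hsol.norm_le hΩR hR.le hm i,
    fun _ ht _ hv => hsol.norm_deriv_le hΩR hR.le hm i ht hv⟩

/-- **A priori estimates for solutions of the seed ODE** (Lemma 4.11 of
Bourne, Egan, Pelloni, Wilkinson): `|z_i(t)| ≤ |z̄_i| + Rt` on `[0,T]` and
`|ż_i(t)| ≤ |z̄_i| + R(1+T)` on `(0,T)`. -/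
theorem seed_ode_apriori_estimates
    (Ω : Set E3) (hΩo : IsOpen Ω) (hΩb : Bornology.IsBounded Ω) (hΩc : Convex ℝ Ω)
    (hΩv : volume Ω = 1) (R : ℝ) (hR : 0 < R) (hΩR : Ω ⊆ Metric.ball 0 R)
    {N : ℕ} (m : Fin N → ℝ) (hm : ∀ i, 0 < m i) (hm1 : ∑ i, m i = 1)
    (T : ℝ) (hT : 0 < T) (z : ℝ → Fin N → E3) (zbar : Fin N → E3)
    (hsol : SeedODESol Ω m T z) (hinit : z 0 = zbar) :
    ∀ i : Fin N,
      (∀ t ∈ Icc (0:ℝ) T, ‖z t i‖ ≤ ‖zbar i‖ + R * t) ∧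
      ∀ t ∈ Ioo (0:ℝ) T, ∀ v : E3,
        HasDerivWithinAt (fun s => z s i) v (Icc 0 T) t →
        ‖v‖ ≤ ‖zbar i‖ + R * (1 + T) :=
  seed_ode_apriori_estimates_general Ω R hR hΩR m hm T z zbar hsol hinit
end
end

section
/- Let m ∈ (0,½], r > 0, set q = r/(1−m), let z̄_1, z̄_2 ∈ ℝ³ be distinct, let ω = 1 − q/|z̄_1 − z̄_2| (so ω ≠ 1), and let ν = (z̄_1 − z̄_2)/|z̄_1 − z̄_2|. Define z_1, z_2 : [0,∞) → ℝ³ by z_1(t) = e^{tJ} z̄_1 − (r/(ω−1)) (e^{ωtJ} − e^{tJ}) ν and z_2(t) = e^{tJ} z̄_2 + (mr/((1−m)(ω−1))) (e^{ωtJ} − e^{tJ}) ν. Then for all t ≥ 0: z_1(t) − z_2(t) = e^{ωtJ}(z̄_1 − z̄_2), in particular |z_1(t) − z_2(t)| = |z̄_1 − z̄_2| ≠ 0, and the pair (z_1, z_2) is a continuously differentiable solution of the system ż_1 = J(z_1 − r (z_1 − z_2)/|z_1 − z_2|), ż_2 = J(z_2 − (mr/(m−1)) (z_1 − z_2)/|z_1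 − z_2|), with z_1(0) = z̄_1 and z_2(0) = z̄_2. -/
open MeasureTheory Set Filter
open scoped ENNReal Topology RealInnerProductSpace

noncomputable section

/-! The seed curves are Duhamel solutions `z(t) = e^{tJ} z̄ + c (e^{ωtJ} - e^{tJ}) ν` of linear
equations `ż = J (z - c (1 - ω) e^{ωtJ} ν)`. The two coefficients are chosen so that the
difference `z₁ - z₂` is the rigid rotation `e^{ωtJ} (z̄₁ - z̄₂)`; since `J` is skew-adjoint its
length stays `|z̄₁ - z̄₂|`, so `e^{ωtJ} ν = (z₁ - z₂)/|z₁ - z₂|` and the linear equations are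
exactly the nonlinear seed system. -/

theorem norm_exp_smul_apply_of_mem_skewAdjoint {H : Type*} [NormedAddCommGroup H]
    [InnerProductSpace ℝ H] [CompleteSpace H] {A : H →L[ℝ] H}
    (hA : A ∈ skewAdjoint (H →L[ℝ] H)) (s : ℝ) (x : H) :
    ‖NormedSpace.exp (s • A) x‖ = ‖x‖ := by
  let +nondep : NormedAlgebra ℚ (H →L[ℝ] H) := .restrictScalars ℚ ℝ _
  have hu : NormedSpace.exp (s • A) ∈ unitary (H →L[ℝ] H) :=
    NormedSpace.exp_mem_unitary_of_mem_skewAdjoint (skewAdjoint.smul_mem s hA)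
  exact ContinuousLinearMap.norm_map_of_mem_unitary hu x

theorem conjTranspose_matJ : matJ.conjTranspose = -matJ := by
  ext i j
  fin_cases i <;> fin_cases j <;> simp [matJ]

theorem J_mem_skewAdjoint : J ∈ skewAdjoint (E3 →L[ℝ] E3) := by
  have hJ : J = Matrix.toEuclideanCLM (𝕜 := ℝ) matJ := rfl
  rw [skewAdjoint.mem_iff, hJ, ← map_star, Matrix.star_eq_conjTranspose, conjTranspose_matJ,
    map_neg]

section Duhamel

variable {E : Type*} [NormedAddCommGroup E] [NormedSpace ℝ E] [CompleteSpace E] (A : E →L[ℝ] E)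

theorem hasDerivAt_exp_mul_smul_apply (c : ℝ) (x : E) (t : ℝ) :
    HasDerivAt (fun u : ℝ => NormedSpace.exp ((c * u) • A) x)
      (c • A (NormedSpace.exp ((c * t) • A) x)) t := by
  have hexp := (hasDerivAt_exp_smul_const' (𝕂 := ℝ) A (c * t)).scomp t
    ((hasDerivAt_id t).const_mul c)
  simpa [Function.comp_def] using hexp.clm_apply (hasDerivAt_const t x)

theorem hasDerivAt_exp_smul_apply (x : E) (t : ℝ) :
    HasDerivAt (fun u : ℝ => NormedSpace.exp (u • A) x) (A (NormedSpace.exp (t • A) x)) t := by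
  simpa using hasDerivAt_exp_mul_smul_apply A 1 x t

theorem contDiff_exp_mul_smul_apply {n : WithTop ℕ∞} (c : ℝ) (x : E) :
    ContDiff ℝ n (fun u : ℝ => NormedSpace.exp ((c * u) • A) x) := by
  have hexp : ContDiff ℝ n (NormedSpace.exp : (E →L[ℝ] E) → E →L[ℝ] E) :=
    contDiff_iff_contDiffAt.2 fun B => (NormedSpace.exp_analytic B).contDiffAt
  exact (hexp.comp ((contDiff_const.mul contDiff_id).smul contDiff_const)).clm_apply contDiff_const

/-- The solution of `ż = A (z - c (1 - ω) e^{ωtA} v)`, `z(0) = x`, given by Duhamel's formula. -/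
def duhamelCurve (x v : E) (c ω t : ℝ) : E :=
  NormedSpace.exp (t • A) x + c • ((NormedSpace.exp ((ω * t) • A) - NormedSpace.exp (t • A)) v)

variable {A}

omit [CompleteSpace E] in
theorem duhamelCurve_zero (x v : E) (c ω : ℝ) : duhamelCurve A x v c ω 0 = x := by
  simp [duhamelCurve]

theorem hasDerivAt_duhamelCurve {c ω b : ℝ} (hb : c * (1 - ω) = b) (x v : E) (t : ℝ) :
    HasDerivAt (duhamelCurve A x v c ω)
      (A (duhamelCurve A x v c ω t - b • NormedSpace.exp ((ω * t) • A) v)) t := by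
  have hderiv := (hasDerivAt_exp_smul_apply A x t).add
    (((hasDerivAt_exp_mul_smul_apply A ω v t).sub (hasDerivAt_exp_smul_apply A v t)).const_smul c)
  convert hderiv using 1
  · ext u
    simp [duhamelCurve]
  · simp only [duhamelCurve, ← hb, sub_apply, map_add, map_sub, map_smul]
    module

theorem contDiff_duhamelCurve {n : WithTop ℕ∞} (x v : E) (c ω : ℝ) :
    ContDiff ℝ n (duhamelCurve A x v c ω) := by
  have hrot := contDiff_exp_mul_smul_apply (n := n) A ω v
  have hone (y : E) : ContDiff ℝ n (fun u : ℝ => NormedSpace.exp (u • A) y) := by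
    simpa using contDiff_exp_mul_smul_apply (n := n) A 1 y
  convert (hone x).add ((hrot.sub (hone v)).const_smul c) using 1
  ext u
  simp [duhamelCurve]

omit [CompleteSpace E] in
theorem duhamelCurve_sub_duhamelCurve {x y v : E} {c c' : ℝ} (h : x - y = (c - c') • v)
    (ω t : ℝ) :
    duhamelCurve A x v c ω t - duhamelCurve A y v c' ω t
      = NormedSpace.exp ((ω * t) • A) (x - y) := by
  obtain rfl : x = (c - c') • v + y := sub_eq_iff_eq_add.1 h
  simp only [duhamelCurve, add_sub_cancel_right, sub_apply, map_add, map_smul]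
  module

end Duhamel

theorem two_mass_explicit_solution_general
    (m r : ℝ) (hm2 : m ≤ 1/2) (hr : 0 < r)
    (zbar1 zbar2 : E3) (hzz : zbar1 ≠ zbar2)
    (q ω : ℝ) (hq : q = r / (1 - m)) (hω : ω = 1 - q / ‖zbar1 - zbar2‖)
    (ν : E3) (hν : ν = ‖zbar1 - zbar2‖⁻¹ • (zbar1 - zbar2))
    (z1 z2 : ℝ → E3)
    (hz1 : ∀ t, z1 t = NormedSpace.exp (t • J) zbar1
      - (r / (ω - 1)) • ((NormedSpace.exp ((ω * t) • J) - NormedSpace.exp (t • J)) ν))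
    (hz2 : ∀ t, z2 t = NormedSpace.exp (t • J) zbar2
      + (m * r / ((1 - m) * (ω - 1))) •
          ((NormedSpace.exp ((ω * t) • J) - NormedSpace.exp (t • J)) ν)) :
    ω ≠ 1 ∧
    ContDiff ℝ 1 z1 ∧ ContDiff ℝ 1 z2 ∧
    z1 0 = zbar1 ∧ z2 0 = zbar2 ∧
    ∀ t : ℝ, 0 ≤ t →
      z1 t - z2 t = NormedSpace.exp ((ω * t) • J) (zbar1 - zbar2) ∧
      ‖z1 t - z2 t‖ = ‖zbar1 - zbar2‖ ∧
      z1 t ≠ z2 t ∧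
      HasDerivAt z1 (J (z1 t - (r / ‖z1 t - z2 t‖) • (z1 t - z2 t))) t ∧
      HasDerivAt z2 (J (z2 t - (m * r / (m - 1) / ‖z1 t - z2 t‖) • (z1 t - z2 t))) t := by
  set d := ‖zbar1 - zbar2‖
  have hd : 0 < d := norm_pos_iff.2 (sub_ne_zero.2 hzz)
  have h1m : 1 - m ≠ 0 := by linarith
  have hm1 : m - 1 ≠ 0 := by linarith
  have hω_sub_one : ω - 1 = -(r / (1 - m) / d) := by rw [hω, hq]; ring
  have hω_ne : ω - 1 ≠ 0 := hω_sub_one ▸ neg_ne_zero.2 (div_pos (div_pos hr (by linarith)) hd).ne'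
  have hdν : zbar1 - zbar2 = d • ν := by
    rw [hν, smul_smul, mul_inv_cancel₀ hd.ne', one_smul]
  have hz1' : z1 = duhamelCurve J zbar1 ν (-(r / (ω - 1))) ω :=
    funext fun t => by rw [hz1, duhamelCurve, neg_smul, sub_eq_add_neg]
  have hz2' : z2 = duhamelCurve J zbar2 ν (m * r / ((1 - m) * (ω - 1))) ω := funext hz2
  have hdiff (t : ℝ) : z1 t - z2 t = NormedSpace.exp ((ω * t) • J) (zbar1 - zbar2) := by
    refine hz1' ▸ hz2' ▸ duhamelCurve_sub_duhamelCurve ?_ ω t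
    rw [hdν, hω_sub_one]
    congr 1
    field_simp
    ring
  have hnorm (t : ℝ) : ‖z1 t - z2 t‖ = d := by
    rw [hdiff, norm_exp_smul_apply_of_mem_skewAdjoint J_mem_skewAdjoint]
  have hforce (t s : ℝ) :
      (s / ‖z1 t - z2 t‖) • (z1 t - z2 t) = s • NormedSpace.exp ((ω * t) • J) ν := by
    rw [hnorm, hdiff, hdν, map_smul, smul_smul, div_mul_cancel₀ _ hd.ne']
  refine ⟨fun h => hω_ne (sub_eq_zero.2 h), hz1' ▸ contDiff_duhamelCurve _ _ _ _,
    hz2' ▸ contDiff_duhamelCurve _ _ _ _, hz1' ▸ duhamelCurve_zero _ _ _ _,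
    hz2' ▸ duhamelCurve_zero _ _ _ _, fun t _ => ⟨hdiff t, hnorm t,
    fun h => hd.ne' (by rw [← hnorm t, h, sub_self, norm_zero]), ?_, ?_⟩⟩
  · rw [hforce, hz1']
    exact hasDerivAt_duhamelCurve (by field_simp; ring) _ _ t
  · rw [hforce, hz2']
    exact hasDerivAt_duhamelCurve (by field_simp; ring) _ _ t

/-- **Explicit two-mass solution of the seed ODE** (Example 6.2 of Bourne, Egan, Pelloni,
Wilkinson). With `q = r/(1-m)`, `ω = 1 - q/|z̄₁ - z̄₂|` and `ν = (z̄₁ - z̄₂)/|z̄₁ - z̄₂|`,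
the explicit formulas obtained from Duhamel's formula solve the two-seed ODE system, and
the difference of the seeds rotates with angular frequency `ω`. -/
theorem two_mass_explicit_solution
    (m r : ℝ) (hm : 0 < m) (hm2 : m ≤ 1/2) (hr : 0 < r)
    (zbar1 zbar2 : E3) (hzz : zbar1 ≠ zbar2)
    (q ω : ℝ) (hq : q = r / (1 - m)) (hω : ω = 1 - q / ‖zbar1 - zbar2‖)
    (ν : E3) (hν : ν = ‖zbar1 - zbar2‖⁻¹ • (zbar1 - zbar2))
    (z1 z2 : ℝ → E3)
    (hz1 : ∀ t, z1 t = NormedSpace.exp (t • J) zbar1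
      - (r / (ω - 1)) • ((NormedSpace.exp ((ω * t) • J) - NormedSpace.exp (t • J)) ν))
    (hz2 : ∀ t, z2 t = NormedSpace.exp (t • J) zbar2
      + (m * r / ((1 - m) * (ω - 1))) •
          ((NormedSpace.exp ((ω * t) • J) - NormedSpace.exp (t • J)) ν)) :
    ω ≠ 1 ∧
    ContDiff ℝ 1 z1 ∧ ContDiff ℝ 1 z2 ∧
    z1 0 = zbar1 ∧ z2 0 = zbar2 ∧
    ∀ t : ℝ, 0 ≤ t →
      z1 t - z2 t = NormedSpace.exp ((ω * t) • J) (zbar1 - zbar2) ∧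
      ‖z1 t - z2 t‖ = ‖zbar1 - zbar2‖ ∧
      z1 t ≠ z2 t ∧
      HasDerivAt z1 (J (z1 t - (r / ‖z1 t - z2 t‖) • (z1 t - z2 t))) t ∧
      HasDerivAt z2 (J (z2 t - (m * r / (m - 1) / ‖z1 t - z2 t‖) • (z1 t - z2 t))) t :=
  two_mass_explicit_solution_general m r hm2 hr zbar1 zbar2 hzz q ω hq hω ν hν z1 z2 hz1 hz2
end
end

section
/- Let Ω be the open ball in ℝ³ of volume 1 centred at the origin and let m ∈ (0,½]. Then there exists r > 0, depending only on m, with the following property: for all distinct z_1, z_2 ∈ ℝ³ and every weight vector w ∈ ℝ² such that L³(C_1((z_1,z_2),w)) = m and L³(C_2((z_1,z_2),w)) = 1 − m, the centroids of the two Laguerre cells satisfy (1/m) ∫_{C_1((z_1,z_2),w)} x dx = r (z_1 − z_2)/|z_1 − z_2| and (1/(1−m)) ∫_{C_2((z_1,z_2),w)} x dx = (mr/(m−1)) (z_1 − z_2)/|z_1 − z_2|. In particular, m times the first centroid plus (1−m) times the second centroid equals 0. -/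
/-!
For distinct seeds the two Laguerre cells of the ball are the caps cut off by a hyperplane
orthogonal to `z₁ - z₂`. The first moment of a cap is fixed by the reflection through the axis of
the cap, hence parallel to the axis. A rotation carries any cap onto a cap with a prescribed axis,
and two nested caps of equal volume agree a.e., so the component of the moment along the axis
depends only on the volume of the cap; this gives `r`. The moments of the two cells add up to the
moment of the ball, which vanishes by symmetry. So the second moment is minus the first, and the
sign of `r` can be read off whichever cell lies in a half-ball, where the integrand has a sign.
-/

open MeasureTheory Set Filter
open scoped ENNReal Topology RealInnerProductSpace

noncomputable section

section

variable {E : Type*} [NormedAddCommGroup E] [InnerProductSpace ℝ E]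

lemma sq_norm_sub_sub_le_iff (x a b : E) (p q : ℝ) :
    ‖x - a‖ ^ 2 - p ≤ ‖x - b‖ ^ 2 - q ↔ ⟪x, b - a⟫ ≤ (‖b‖ ^ 2 - ‖a‖ ^ 2 + p - q) / 2 := by
  rw [norm_sub_sq_real, norm_sub_sq_real, inner_sub_right]
  constructor <;> intro h <;> linarith

def ballCap (R : ℝ) (u : E) (s : ℝ) : Set E := Metric.ball 0 R ∩ {x | ⟪x, u⟫ ≤ s}

lemma ballCap_subset_ball (R : ℝ) (u : E) (s : ℝ) : ballCap R u s ⊆ Metric.ball 0 R :=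
  inter_subset_left

lemma ballCap_mono (R : ℝ) (u : E) {s t : ℝ} (hst : s ≤ t) : ballCap R u s ⊆ ballCap R u t :=
  fun _ hx => ⟨hx.1, hx.2.trans hst⟩

lemma ballCap_smul_left (R : ℝ) (u : E) (s : ℝ) {t : ℝ} (ht : 0 < t) :
    ballCap R (t • u) s = ballCap R u (s / t) := by
  ext x
  simp only [ballCap, mem_inter_iff, mem_ofPred_eq, real_inner_smul_right, le_div_iff₀' ht]

lemma ballCap_union_ballCap_neg (R : ℝ) (u : E) (s : ℝ) :
    ballCap R u s ∪ ballCap R (-u) (-s) = Metric.ball 0 R := by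
  ext x
  simp only [ballCap, mem_union, mem_inter_iff, mem_ofPred_eq, inner_neg_right, neg_le_neg_iff]
  constructor
  · rintro (h | h) <;> exact h.1
  · intro hx
    exact (le_total ⟪x, u⟫ s).imp (⟨hx, ·⟩) (⟨hx, ·⟩)

lemma ballCap_inter_ballCap_neg_subset (R : ℝ) (u : E) (s : ℝ) :
    ballCap R u s ∩ ballCap R (-u) (-s) ⊆ {x | ⟪x, u⟫ = s} := by
  rintro x ⟨⟨-, hx⟩, -, hx'⟩
  simp only [mem_ofPred_eq, inner_neg_right, neg_le_neg_iff] at hx hx' ⊢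
  exact le_antisymm hx hx'

lemma image_ballCap (g : E ≃ₗᵢ[ℝ] E) (R : ℝ) (u : E) (s : ℝ) :
    g '' ballCap R u s = ballCap R (g u) s := by
  ext x
  simp only [g.image_eq_preimage_symm, ballCap, mem_preimage, mem_inter_iff, mem_ball_zero_iff,
    mem_ofPred_eq, LinearIsometryEquiv.norm_map]
  rw [← g.inner_map_map, g.apply_symm_apply]

variable [FiniteDimensional ℝ E] [MeasurableSpace E] [BorelSpace E]

lemma measurableSet_ballCap (R : ℝ) (u : E) (s : ℝ) : MeasurableSet (ballCap R u s) :=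
  measurableSet_ball.inter (measurableSet_le (by fun_prop) measurable_const)

lemma volume_setOf_inner_eq {u : E} (hu : u ≠ 0) (s : ℝ) : volume {x : E | ⟪x, u⟫ = s} = 0 := by
  have hu2 : ‖u‖ ^ 2 ≠ 0 := by positivity
  have h : {x : E | ⟪x, u⟫ = s} = (fun x => -((s / ‖u‖ ^ 2) • u) + x) ⁻¹' (ℝ ∙ u)ᗮ := by
    ext x
    rw [mem_preimage, SetLike.mem_coe, Submodule.mem_orthogonal_singleton_iff_inner_left,
      inner_add_left, inner_neg_left, real_inner_smul_left, real_inner_self_eq_norm_sq,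
      div_mul_cancel₀ _ hu2, neg_add_eq_zero, eq_comm, mem_ofPred_eq]
  rw [h, measure_preimage_add, Measure.addHaar_submodule]
  rwa [Ne, Submodule.orthogonal_eq_top_iff, Submodule.span_singleton_eq_bot]

lemma volume_image_linearIsometryEquiv (g : E ≃ₗᵢ[ℝ] E) {S : Set E} (hS : MeasurableSet S) :
    volume (g '' S) = volume S := by
  rw [g.image_eq_preimage_symm]
  exact g.symm.measurePreserving.measure_preimage hS.nullMeasurableSet

lemma setIntegral_image_linearIsometryEquiv (g : E ≃ₗᵢ[ℝ] E) (S : Set E) :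
    ∫ x in g '' S, x = g (∫ x in S, x) := by
  rw [g.measurePreserving.setIntegral_image_emb g.toHomeomorph.measurableEmbedding]
  exact g.toLinearIsometry.integral_comp_comm _

lemma integrableOn_id_ball (R : ℝ) : IntegrableOn (fun x : E => x) (Metric.ball 0 R) :=
  (continuousOn_id.integrableOn_compact (isCompact_closedBall 0 R)).mono_set
    Metric.ball_subset_closedBall

lemma setIntegral_ball_id (R : ℝ) : ∫ x in Metric.ball (0 : E) R, x = 0 := by
  have h :=
    setIntegral_image_linearIsometryEquiv (LinearIsometryEquiv.neg ℝ) (Metric.ball (0 : E) R)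
  simp only [LinearIsometryEquiv.coe_neg, image_neg_eq_neg, neg_ball, neg_zero] at h
  have h2 : (2 : ℝ) • ∫ x in Metric.ball (0 : E) R, x = 0 := by
    rw [two_smul]
    nth_rewrite 2 [h]
    exact add_neg_cancel _
  exact (smul_eq_zero.1 h2).resolve_left two_ne_zero

lemma setIntegral_ballCap_add_setIntegral_ballCap_neg (R : ℝ) {u : E} (hu : u ≠ 0) (s : ℝ) :
    (∫ x in ballCap R u s, x) + ∫ x in ballCap R (-u) (-s), x = 0 := by
  have hdisj : AEDisjoint volume (ballCap R u s) (ballCap R (-u) (-s)) :=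
    measure_mono_null (ballCap_inter_ballCap_neg_subset R u s) (volume_setOf_inner_eq hu s)
  rw [← setIntegral_union₀ hdisj (measurableSet_ballCap R (-u) (-s)).nullMeasurableSet
    ((integrableOn_id_ball R).mono_set (ballCap_subset_ball R u s))
    ((integrableOn_id_ball R).mono_set (ballCap_subset_ball R (-u) (-s))),
    ballCap_union_ballCap_neg, setIntegral_ball_id]

lemma setIntegral_ballCap_eq_inner_smul (R : ℝ) {u : E} (hu : ‖u‖ = 1) (s : ℝ) :
    ∫ x in ballCap R u s, x = ⟪∫ x in ballCap R u s, x, u⟫ • u := by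
  have hfix : (ℝ ∙ u).reflection u = u :=
    ((ℝ ∙ u).reflection_eq_self_iff u).2 (Submodule.mem_span_singleton_self u)
  have hmem : ∫ x in ballCap R u s, x ∈ ℝ ∙ u := by
    rw [← Submodule.reflection_eq_self_iff]
    have h := setIntegral_image_linearIsometryEquiv (ℝ ∙ u).reflection (ballCap R u s)
    rwa [image_ballCap, hfix, eq_comm] at h
  obtain ⟨a, ha⟩ := Submodule.mem_span_singleton.1 hmem
  rw [← ha, real_inner_smul_left, real_inner_self_eq_norm_sq, hu, one_pow, mul_one]

lemma inner_setIntegral_ballCap_neg_of_nonpos (R : ℝ) {u : E} (hu : u ≠ 0) {s : ℝ}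
    (hs : s ≤ 0) (hvol : volume (ballCap R u s) ≠ 0) : ⟪∫ x in ballCap R u s, x, u⟫ < 0 := by
  have hint : IntegrableOn (fun x : E => x) (ballCap R u s) :=
    (integrableOn_id_ball R).mono_set (ballCap_subset_ball R u s)
  have hnonneg : 0 ≤ᵐ[volume.restrict (ballCap R u s)] fun x : E => -⟪x, u⟫ := by
    filter_upwards [ae_restrict_mem (measurableSet_ballCap R u s)] with x hx
    exact neg_nonneg.2 (hx.2.trans hs)
  have hsupp : ballCap R u s \ {x | ⟪x, u⟫ = 0} ⊆
      Function.support (fun x : E => -⟪x, u⟫) ∩ ballCap R u s :=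
    fun x hx => ⟨neg_ne_zero.2 hx.2, hx.1⟩
  have hpos : 0 < ∫ x in ballCap R u s, -⟪x, u⟫ := by
    rw [setIntegral_pos_iff_support_of_nonneg_ae hnonneg (hint.inner_const u).neg]
    refine (pos_iff_ne_zero.2 hvol).trans_le ?_
    rw [← measure_sdiff_null (volume_setOf_inner_eq hu 0)]
    exact measure_mono hsupp
  have hcomm : ∫ x in ballCap R u s, ⟪x, u⟫ = ⟪∫ x in ballCap R u s, x, u⟫ := by
    simp_rw [real_inner_comm u]
    exact integral_inner hint u
  rw [integral_neg, hcomm] at hpos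
  exact neg_pos.1 hpos

lemma inner_setIntegral_ballCap_neg (R : ℝ) {u : E} (hu : u ≠ 0) {s : ℝ}
    (hvol : volume (ballCap R u s) ≠ 0) (hvol' : volume (ballCap R (-u) (-s)) ≠ 0) :
    ⟪∫ x in ballCap R u s, x, u⟫ < 0 := by
  rcases le_total s 0 with hs | hs
  · exact inner_setIntegral_ballCap_neg_of_nonpos R hu hs hvol
  · have h :=
      inner_setIntegral_ballCap_neg_of_nonpos R (neg_ne_zero.2 hu) (neg_nonpos.2 hs) hvol'
    rwa [eq_neg_of_add_eq_zero_left (setIntegral_ballCap_add_setIntegral_ballCap_neg R hu s),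
      inner_neg_left, ← inner_neg_right]

lemma setIntegral_ballCap_congr_of_volume_eq {F : Type*} [NormedAddCommGroup F]
    [NormedSpace ℝ F] (f : E → F) (R : ℝ) (u : E) {s t : ℝ}
    (h : volume (ballCap R u s) = volume (ballCap R u t)) :
    ∫ x in ballCap R u s, f x = ∫ x in ballCap R u t, f x := by
  have hfin : ∀ s, volume (ballCap R u s) ≠ ∞ := fun s =>
    (measure_mono (ballCap_subset_ball R u s)).trans_lt measure_ball_lt_top |>.ne
  rcases le_total s t with hst | hts
  · exact setIntegral_congr_set (ae_eq_of_subset_of_measure_ge (ballCap_mono R u hst) h.ge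
      (measurableSet_ballCap R u s).nullMeasurableSet (hfin t))
  · exact (setIntegral_congr_set (ae_eq_of_subset_of_measure_ge (ballCap_mono R u hts) h.le
      (measurableSet_ballCap R u t).nullMeasurableSet (hfin s))).symm

lemma inner_setIntegral_ballCap_eq_of_volume_eq (R : ℝ) {u v : E} (hu : ‖u‖ = 1)
    (hv : ‖v‖ = 1) {s t : ℝ} (h : volume (ballCap R u s) = volume (ballCap R v t)) :
    ⟪∫ x in ballCap R u s, x, u⟫ = ⟪∫ x in ballCap R v t, x, v⟫ := by
  set g := (ℝ ∙ (u - v))ᗮ.reflection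
  have hg : g u = v := Submodule.reflection_sub (hu.trans hv.symm)
  have hcap : ballCap R v t = g '' ballCap R u t := by rw [image_ballCap, hg]
  rw [hcap, volume_image_linearIsometryEquiv g (measurableSet_ballCap R u t)] at h
  rw [hcap, setIntegral_image_linearIsometryEquiv, ← hg, g.inner_map_map,
    setIntegral_ballCap_congr_of_volume_eq _ R u h]

lemma exists_inner_setIntegral_ballCap_eq (R : ℝ) {V : ℝ≥0∞} (hV : V ≠ 0) :
    ∃ c < 0, ∀ (u : E) (s : ℝ), ‖u‖ = 1 → volume (ballCap R u s) = V →
      volume (ballCap R (-u) (-s)) ≠ 0 → ⟪∫ x in ballCap R u s, x, u⟫ = c := by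
  by_cases h : ∃ (u : E) (s : ℝ), ‖u‖ = 1 ∧ volume (ballCap R u s) = V ∧
      volume (ballCap R (-u) (-s)) ≠ 0
  · obtain ⟨u₀, s₀, hu₀, hV₀, hV₀'⟩ := h
    refine ⟨_, inner_setIntegral_ballCap_neg R (norm_ne_zero_iff.1 (hu₀ ▸ one_ne_zero))
      (hV₀ ▸ hV) hV₀', fun u s hu hVu _ => ?_⟩
    exact inner_setIntegral_ballCap_eq_of_volume_eq R hu hu₀ (hVu.trans hV₀.symm)
  · push Not at h
    exact ⟨-1, neg_one_lt_zero, fun u s hu hVu hVu' => absurd (h u s hu hVu) hVu'⟩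

end

lemma lagCell_two_eq (Ω : Set E3) (z : Fin 2 → E3) (w : Fin 2 → ℝ) {i j : Fin 2}
    (hij : i ≠ j) :
    lagCell Ω z w i = Ω ∩ {x | ⟪x, z j - z i⟫ ≤ (‖z j‖ ^ 2 - ‖z i‖ ^ 2 + w i - w j) / 2} := by
  ext x
  simp only [lagCell, mem_inter_iff, mem_ofPred_eq, ← sq_norm_sub_sub_le_iff]
  refine and_congr_right fun _ => ⟨fun h => h j, fun h k => ?_⟩
  rcases (by omega : k = i ∨ k = j) with rfl | rfl
  · exact le_rfl
  · exact h

lemma exists_lagCell_ball_eq_ballCap (R : ℝ) {z1 z2 : E3} (hz : z1 ≠ z2) (w : Fin 2 → ℝ) :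
    ∃ s, lagCell (Metric.ball 0 R) ![z1, z2] w 0 =
        ballCap R (-(‖z1 - z2‖⁻¹ • (z1 - z2))) s ∧
      lagCell (Metric.ball 0 R) ![z1, z2] w 1 = ballCap R (‖z1 - z2‖⁻¹ • (z1 - z2)) (-s) := by
  set d := ‖z1 - z2‖
  set u := d⁻¹ • (z1 - z2)
  have hd : 0 < d := norm_pos_iff.2 (sub_ne_zero.2 hz)
  have hz21 : z2 - z1 = d • -u := by simp [u, smul_smul, hd.ne']
  have hz12 : z1 - z2 = d • u := by simp [u, smul_smul, hd.ne']
  refine ⟨(‖z2‖ ^ 2 - ‖z1‖ ^ 2 + w 0 - w 1) / 2 / d, ?_, ?_⟩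
  · rw [lagCell_two_eq _ _ _ zero_ne_one]
    change ballCap R _ _ = _
    simp only [Matrix.cons_val_zero, Matrix.cons_val_one]
    rw [hz21, ballCap_smul_left R _ _ hd]
  · rw [lagCell_two_eq _ _ _ one_ne_zero]
    change ballCap R _ _ = _
    simp only [Matrix.cons_val_zero, Matrix.cons_val_one]
    rw [hz12, ballCap_smul_left R _ _ hd]
    congr 1
    ring

/-- **Structure of the Laguerre-cell centroids for two masses in a ball** (Example 6.2 of
Bourne, Egan, Pelloni, Wilkinson): there is a constant `r > 0`, depending only on `m`, such
that for any two distinct seeds and any weights realising the masses `(m, 1-m)`, the cell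
centroids are `r (z₁-z₂)/|z₁-z₂|` and `(mr/(m-1)) (z₁-z₂)/|z₁-z₂|`; in particular the
weighted sum of the centroids is the centre of the ball. -/
theorem two_mass_centroids_in_ball
    (Ω : Set E3) (hΩ : Ω = Metric.ball 0 ((3 / (4 * Real.pi)) ^ ((1:ℝ) / 3)))
    (m : ℝ) (hm : 0 < m) (hm2 : m ≤ 1/2) :
    ∃ r : ℝ, 0 < r ∧
      ∀ z1 z2 : E3, z1 ≠ z2 → ∀ w : Fin 2 → ℝ,
        volume (lagCell Ω ![z1, z2] w 0) = ENNReal.ofReal m →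
        volume (lagCell Ω ![z1, z2] w 1) = ENNReal.ofReal (1 - m) →
        m⁻¹ • (∫ x in lagCell Ω ![z1, z2] w 0, x)
            = (r / ‖z1 - z2‖) • (z1 - z2) ∧
        (1 - m)⁻¹ • (∫ x in lagCell Ω ![z1, z2] w 1, x)
            = (m * r / (m - 1) / ‖z1 - z2‖) • (z1 - z2) ∧
        m • (m⁻¹ • ∫ x in lagCell Ω ![z1, z2] w 0, x)
          + (1 - m) • ((1 - m)⁻¹ • ∫ x in lagCell Ω ![z1, z2] w 1, x) = 0 := by
  subst hΩ
  set R : ℝ := (3 / (4 * Real.pi)) ^ ((1:ℝ) / 3)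
  have hm1 : 0 < 1 - m := by linarith
  obtain ⟨c, hc, hcap⟩ :=
    exists_inner_setIntegral_ballCap_eq (E := E3) R (ENNReal.ofReal_pos.2 hm).ne'
  refine ⟨-c / m, div_pos (neg_pos.2 hc) hm, fun z1 z2 hz w h0 h1 => ?_⟩
  obtain ⟨s, hcell0, hcell1⟩ := exists_lagCell_ball_eq_ballCap R hz w
  set u : E3 := ‖z1 - z2‖⁻¹ • (z1 - z2)
  have hu : ‖-u‖ = 1 := by rw [norm_neg]; exact norm_smul_inv_norm (sub_ne_zero.2 hz)
  rw [hcell0] at h0 ⊢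
  rw [hcell1] at h1 ⊢
  have hsum := setIntegral_ballCap_add_setIntegral_ballCap_neg R
    (norm_ne_zero_iff.1 (by rw [hu]; exact one_ne_zero) : -u ≠ 0) s
  rw [neg_neg] at hsum
  have hI0 : ∫ x in ballCap R (-u) s, x = c • -u := by
    rw [setIntegral_ballCap_eq_inner_smul R hu,
      hcap _ _ hu h0 (by rw [neg_neg, h1]; exact (ENNReal.ofReal_pos.2 hm1).ne')]
  have hI1 : ∫ x in ballCap R u (-s), x = -(c • -u) := by
    rw [← hI0]; exact eq_neg_of_add_eq_zero_right hsum
  refine ⟨?_, ?_, ?_⟩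
  · rw [hI0]
    module
  · rw [hI1, show m * (-c / m) / (m - 1) = c / (1 - m) by
      rw [mul_div_cancel₀ _ hm.ne', ← neg_sub, div_neg, neg_div, neg_neg]]
    module
  · rw [smul_inv_smul₀ hm.ne', smul_inv_smul₀ hm1.ne', hsum]
end
end
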